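/- For a finite bipartite graph G = (X ⊔ Y, E), the partitions X = X_S ⊔ X_L and Y = Y_S ⊔ Y_L satisfying (a) there are no edges between X_S and Y_L, (b) G[X_S, Y_S] is Y-path-saturated, and (c) G[X_L, Y_L] admits a matching saturating X_L, are unique: if (X_S, X_L, Y_S, Y_L) and (X_S', X_L', Y_S', Y_L') both satisfy (a), (b), (c), then X_S = X_S', X_L = X_L', Y_S = Y_S', and Y_L = Y_L'. -/

import Mathlib

/-!
Given two such partitions, put `S = X_S ∩ X_L'` and `T = Y_S ∩ Y_L'`. The matching of (c') for
the second partition maps `S` injectively into `T`, because by (a) the partners of `S ⊆ X_S`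
avoid `Y_L`; so `|S| ≤ |T|`. On the other hand, by (a') every `X_S`-neighbour of `T` lies in `S`,
and a `Y`-path-saturated graph has positive surplus on its `Y`-side: the perfect matchings give
`|T ∩ Y_i| ≤ |S ∩ X_i|` layer by layer, and at the first layer `Y_i` met by `T` the edge back into
`X_{i-1}` makes one of these inequalities strict (or puts a vertex of `S` into `X_0`). Hence `T`,
and then `S`, are empty; by symmetry the two partitions coincide.
-/

attribute [local instance] Classical.propDecidable

variable {V : Type*}

/-- `X, Y` form a bipartition of the vertex set of the simple graph `G`:
they are disjoint, cover all vertices, and every edge joins `X` to `Y`. -/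
def IsBipartition [Fintype V] (G : SimpleGraph V) (X Y : Finset V) : Prop :=
  Disjoint X Y ∧ X ∪ Y = Finset.univ ∧
    ∀ ⦃u v : V⦄, G.Adj u v → (u ∈ X ∧ v ∈ Y) ∨ (u ∈ Y ∧ v ∈ X)

/-- `M` is a matching of `G` all of whose edges go from `X'` to `Y'`
(i.e. a matching of the induced subgraph `G[X', Y']`), recorded as a set of
pairwise vertex-disjoint adjacent pairs. -/
def IsBipMatching (G : SimpleGraph V) (X' Y' : Finset V) (M : Finset (V × V)) : Prop :=
  (∀ p ∈ M, p.1 ∈ X' ∧ p.2 ∈ Y' ∧ G.Adj p.1 p.2) ∧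
  ∀ p ∈ M, ∀ q ∈ M, p ≠ q → p.1 ≠ q.1 ∧ p.2 ≠ q.2

/-- `M` is envy-free w.r.t. `X`: no unmatched vertex of `X` is adjacent to a
matched vertex on the `Y`-side of `M`. -/
def EnvyFree (G : SimpleGraph V) (X : Finset V) (M : Finset (V × V)) : Prop :=
  ∀ x ∈ X, x ∉ M.image Prod.fst → ∀ y ∈ M.image Prod.snd, ¬ G.Adj x y

/-- The (bipartite) graph `G[X ∪ Y]` is `Y`-path-saturated: for some `k ≥ 1` there are
partitions `X = X_0 ⊔ ⋯ ⊔ X_k` and `Y = Y_1 ⊔ ⋯ ⊔ Y_k` such that for `1 ≤ i ≤ k`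
there is a perfect matching between `X_i` and `Y_i`, and every vertex of `Y_i` is
adjacent to some vertex of `X_{i-1}`. -/
def YPathSaturated (G : SimpleGraph V) (X Y : Finset V) : Prop :=
  ∃ k : ℕ, 1 ≤ k ∧ ∃ A B : ℕ → Finset V,
    (∀ i ∈ Finset.range (k + 1), ∀ j ∈ Finset.range (k + 1), i ≠ j → Disjoint (A i) (A j)) ∧
    (∀ i ∈ Finset.Icc 1 k, ∀ j ∈ Finset.Icc 1 k, i ≠ j → Disjoint (B i) (B j)) ∧
    X = (Finset.range (k + 1)).biUnion A ∧
    Y = (Finset.Icc 1 k).biUnion B ∧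
    (∀ i ∈ Finset.Icc 1 k, ∃ f : V → V,
      Set.BijOn f (A i) (B i) ∧ ∀ x ∈ A i, G.Adj x (f x)) ∧
    (∀ i ∈ Finset.Icc 1 k, ∀ y ∈ B i, ∃ x ∈ A (i - 1), G.Adj x y)

open Finset

theorem eq_and_eq_of_sup_eq_sup {α : Type*} [DistribLattice α] [OrderBot α] {a b a' b' : α}
    (hab : Disjoint a b) (ha'b' : Disjoint a' b') (h : a ⊔ b = a' ⊔ b')
    (ha'b : Disjoint a' b) (hab' : Disjoint a b') : a = a' ∧ b = b' := by
  have ha : a ≤ a' := Disjoint.left_le_of_le_sup_right (le_sup_left.trans h.le) hab'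
  have ha' : a' ≤ a := Disjoint.left_le_of_le_sup_right (le_sup_left.trans h.ge) ha'b
  have hb : b ≤ b' :=
    Disjoint.left_le_of_le_sup_left (le_sup_right.trans h.le) (hab.mono_left ha').symm
  have hb' : b' ≤ b :=
    Disjoint.left_le_of_le_sup_left (le_sup_right.trans h.ge) (ha'b'.mono_left ha).symm
  exact ⟨ha.antisymm ha', hb.antisymm hb'⟩

theorem sum_Icc_lt_sum_range {a b : ℕ → ℕ} {k j : ℕ} (hle : ∀ i ∈ Icc 1 k, b i ≤ a i)
    (hj : j ≤ k) (hbj : j = 0 ∨ b j = 0) (haj : 0 < a j) :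
    ∑ i ∈ Icc 1 k, b i < ∑ i ∈ range (k + 1), a i := by
  have hsplit : ∑ i ∈ range (k + 1), a i = a 0 + ∑ i ∈ Icc 1 k, a i := by
    rw [range_eq_Ico, sum_eq_sum_Ico_succ_bot (Nat.succ_pos k)]
    rfl
  have hsum := sum_le_sum hle
  rw [hsplit]
  rcases Nat.eq_zero_or_pos j with rfl | hj0
  · omega
  · have hlt : ∑ i ∈ Icc 1 k, b i < ∑ i ∈ Icc 1 k, a i :=
      sum_lt_sum hle ⟨j, mem_Icc.mpr ⟨hj0, hj⟩, by omega⟩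
    omega

theorem IsBipMatching.card_le_of_saturates {G : SimpleGraph V} {X' Y' S T : Finset V}
    {M : Finset (V × V)} (hM : IsBipMatching G X' Y' M) (hS : S ⊆ M.image Prod.fst)
    (hT : ∀ x ∈ S, ∀ y ∈ Y', G.Adj x y → y ∈ T) : #S ≤ #T := by
  set N := M.filter (·.1 ∈ S)
  have hsnd : Set.InjOn Prod.snd (N : Set (V × V)) := fun p hp q hq hpq => by
    by_contra hne
    exact (hM.2 p (mem_filter.mp hp).1 q (mem_filter.mp hq).1 hne).2 hpq
  calc #S ≤ #(N.image Prod.fst) := card_le_card fun x hx => by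
        obtain ⟨p, hp, rfl⟩ := mem_image.mp (hS hx)
        exact mem_image_of_mem _ (mem_filter.mpr ⟨hp, hx⟩)
    _ ≤ #N := card_image_le
    _ = #(N.image Prod.snd) := (card_image_of_injOn hsnd).symm
    _ ≤ #T := card_le_card <| image_subset_iff.mpr fun p hp => by
        obtain ⟨hpM, hpS⟩ := mem_filter.mp hp
        obtain ⟨-, hpY, hpadj⟩ := hM.1 p hpM
        exact hT p.1 hpS p.2 hpY hpadj

theorem card_inter_le_card_inter_of_surjOn {f : V → V} {A B S T : Finset V}
    (hf : Set.SurjOn f A B) (hS : ∀ x ∈ A, f x ∈ T → x ∈ S) : #(T ∩ B) ≤ #(S ∩ A) := by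
  refine (card_le_card fun y hy => ?_).trans (card_image_le (f := f))
  obtain ⟨hyT, hyB⟩ := mem_inter.mp hy
  obtain ⟨x, hxA, rfl⟩ := hf hyB
  exact mem_image_of_mem f (mem_inter.mpr ⟨hS x hxA hyT, hxA⟩)

theorem YPathSaturated.card_lt_card {G : SimpleGraph V} {XS YS S T : Finset V}
    (hb : YPathSaturated G XS YS) (hT : T ⊆ YS) (hTne : T.Nonempty)
    (hS : ∀ x ∈ XS, ∀ y ∈ T, G.Adj x y → x ∈ S) : #T < #S := by
  obtain ⟨k, -, A, B, hAdisj, -, rfl, rfl, hmatch, hdom⟩ := hb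
  have hmeets : ∃ i, i ∈ Icc 1 k ∧ (T ∩ B i).Nonempty := by
    obtain ⟨y, hy⟩ := hTne
    obtain ⟨i, hi, hyB⟩ := mem_biUnion.mp (hT hy)
    exact ⟨i, hi, y, mem_inter.mpr ⟨hy, hyB⟩⟩
  obtain ⟨hi, y, hy⟩ := Nat.find_spec hmeets
  set i := Nat.find hmeets
  have hi' := mem_Icc.mp hi
  obtain ⟨x, hxA, hxy⟩ := hdom i hi y (mem_inter.mp hy).2
  have hxS : x ∈ S :=
    hS x (mem_biUnion.mpr ⟨i - 1, mem_range.mpr (by omega), hxA⟩) y (mem_inter.mp hy).1 hxy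
  have hbelow : i - 1 = 0 ∨ #(T ∩ B (i - 1)) = 0 := by
    by_contra! h
    exact Nat.find_min hmeets (show i - 1 < i by omega)
      ⟨mem_Icc.mpr ⟨by omega, by omega⟩, card_pos.mp (Nat.pos_of_ne_zero h.2)⟩
  have hle : ∀ j ∈ Icc 1 k, #(T ∩ B j) ≤ #(S ∩ A j) := fun j hj => by
    obtain ⟨f, hf, hadj⟩ := hmatch j hj
    refine card_inter_le_card_inter_of_surjOn hf.surjOn fun x hxA hfx => ?_
    have hxXS : x ∈ (range (k + 1)).biUnion A :=
      mem_biUnion.mpr ⟨j, mem_range.mpr (Nat.lt_succ_of_le (mem_Icc.mp hj).2), hxA⟩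
    exact hS x hxXS _ hfx (hadj x hxA)
  have hAdisj' : (range (k + 1) : Set ℕ).PairwiseDisjoint fun j => S ∩ A j :=
    fun i hi j hj hij => (hAdisj i hi j hj hij).mono inter_subset_right inter_subset_right
  calc #T ≤ ∑ j ∈ Icc 1 k, #(T ∩ B j) := by
        refine (card_le_card ?_).trans card_biUnion_le
        rw [← inter_biUnion]
        exact subset_inter subset_rfl hT
    _ < ∑ j ∈ range (k + 1), #(S ∩ A j) :=
        sum_Icc_lt_sum_range hle (by omega) hbelow (card_pos.mpr ⟨x, mem_inter.mpr ⟨hxS, hxA⟩⟩)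
    _ = #((range (k + 1)).biUnion fun j => S ∩ A j) := (card_biUnion hAdisj').symm
    _ ≤ #S := card_le_card (biUnion_subset.mpr fun _ _ => inter_subset_left)

theorem disjoint_of_yPathSaturated_of_matching {G : SimpleGraph V}
    {XS XS' XL' YS YL YL' : Finset V} (hX : XS ⊆ XS' ∪ XL') (hY : YL' ⊆ YS ∪ YL)
    (ha : ∀ x ∈ XS, ∀ y ∈ YL, ¬ G.Adj x y) (hb : YPathSaturated G XS YS)
    (ha' : ∀ x ∈ XS', ∀ y ∈ YL', ¬ G.Adj x y)
    (hc' : ∃ M : Finset (V × V), IsBipMatching G XL' YL' M ∧ XL' ⊆ M.image Prod.fst) :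
    Disjoint XS XL' ∧ Disjoint YS YL' := by
  obtain ⟨M, hM, hsat⟩ := hc'
  have hST : #(XS ∩ XL') ≤ #(YS ∩ YL') :=
    hM.card_le_of_saturates (inter_subset_right.trans hsat) fun x hx y hy hxy =>
      mem_inter.mpr ⟨(mem_union.mp (hY hy)).resolve_right (ha x (mem_inter.mp hx).1 y · hxy), hy⟩
  have hT : ¬ (YS ∩ YL').Nonempty := fun hne =>
    lt_irrefl _ <| hST.trans_lt <| hb.card_lt_card inter_subset_left hne fun x hx y hy hxy =>
      mem_inter.mpr ⟨hx, (mem_union.mp (hX hx)).resolve_left (ha' x · y (mem_inter.mp hy).2 hxy)⟩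
  rw [not_nonempty_iff_eq_empty] at hT
  rw [hT, card_empty, Nat.le_zero, card_eq_zero] at hST
  exact ⟨disjoint_iff_inter_eq_empty.mpr hST, disjoint_iff_inter_eq_empty.mpr hT⟩

theorem structure_partition_unique (G : SimpleGraph V) (X Y : Finset V)
    (XS XL YS YL XS' XL' YS' YL' : Finset V)
    (hXdisj : Disjoint XS XL) (hXunion : XS ∪ XL = X)
    (hYdisj : Disjoint YS YL) (hYunion : YS ∪ YL = Y)
    (ha : ∀ x ∈ XS, ∀ y ∈ YL, ¬ G.Adj x y)
    (hb : YPathSaturated G XS YS)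
    (hc : ∃ M : Finset (V × V), IsBipMatching G XL YL M ∧ XL ⊆ M.image Prod.fst)
    (hXdisj' : Disjoint XS' XL') (hXunion' : XS' ∪ XL' = X)
    (hYdisj' : Disjoint YS' YL') (hYunion' : YS' ∪ YL' = Y)
    (ha' : ∀ x ∈ XS', ∀ y ∈ YL', ¬ G.Adj x y)
    (hb' : YPathSaturated G XS' YS')
    (hc' : ∃ M : Finset (V × V), IsBipMatching G XL' YL' M ∧ XL' ⊆ M.image Prod.fst) :
    XS = XS' ∧ XL = XL' ∧ YS = YS' ∧ YL = YL' := by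
  have hX : XS ∪ XL = XS' ∪ XL' := hXunion.trans hXunion'.symm
  have hY : YS ∪ YL = YS' ∪ YL' := hYunion.trans hYunion'.symm
  obtain ⟨hXS_XL', hYS_YL'⟩ := disjoint_of_yPathSaturated_of_matching
    (hX ▸ subset_union_left) (hY ▸ subset_union_right) ha hb ha' hc'
  obtain ⟨hXS'_XL, hYS'_YL⟩ := disjoint_of_yPathSaturated_of_matching
    (hX ▸ subset_union_left) (hY ▸ subset_union_right) ha' hb' ha hc
  obtain ⟨hXS, hXL⟩ := eq_and_eq_of_sup_eq_sup hXdisj hXdisj' hX hXS'_XL hXS_XL'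
  obtain ⟨hYS, hYL⟩ := eq_and_eq_of_sup_eq_sup hYdisj hYdisj' hY hYS'_YL hYS_YL'
  exact ⟨hXS, hXL, hYS, hYL⟩
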